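/- arXiv:2504.19893 — 7 statements merged into one kernel-verified Lean document; each statement's English description precedes it below -/
import Mathlib

section
/- Let Z be a finite set of variables, let Z_1, …, Z_n be subsets of Z, and for each j let I_j be the ideal of the polynomial ring K[Z] generated by the variables in Z_j. Then the ideal I = I_1 ∩ ⋯ ∩ I_n is generated by the set of monomials Z_trans = { ∏_{z∈Y} z : Y ⊆ Z and Y ∩ Z_i ≠ ∅ for all 1 ≤ i ≤ n }. -/
open MvPolynomial

theorem stmt3 (K : Type*) [Field K] (σ : Type*) [Fintype σ] [DecidableEq σ]
    (n : ℕ) (Z : Fin n → Finset σ) :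
    Ideal.span {m : MvPolynomial σ K |
        ∃ Y : Finset σ, (∀ i : Fin n, (Y ∩ Z i).Nonempty) ∧ m = ∏ z ∈ Y, X z} =
      ⨅ i : Fin n, Ideal.span ((fun z => (X z : MvPolynomial σ K)) '' (Z i : Set σ)) := by
  apply le_antisymm
  · rw [Ideal.span_le]
    rintro m ⟨Y, hY, rfl⟩
    simp only [SetLike.mem_coe, Ideal.mem_iInf]
    intro i
    obtain ⟨z, hz⟩ := hY i
    simp only [Finset.mem_inter] at hz
    have hmem : (X z : MvPolynomial σ K) ∈
        Ideal.span ((fun z => (X z : MvPolynomial σ K)) '' (Z i : Set σ)) :=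
      Ideal.subset_span ⟨z, by simpa using hz.2, rfl⟩
    obtain ⟨c, hc⟩ := Finset.dvd_prod_of_mem (fun w => (X w : MvPolynomial σ K)) hz.1
    rw [hc]
    exact Ideal.mul_mem_right _ _ hmem
  · intro f hf
    rw [Ideal.mem_iInf] at hf
    have hsup : ∀ d ∈ f.support, ∀ i : Fin n, ∃ z ∈ Z i, d z ≠ 0 := by
      intro d hd i
      have := hf i
      rw [show ((fun z => (X z : MvPolynomial σ K)) '' (Z i : Set σ)) =
          (MvPolynomial.X '' (Z i : Set σ)) from rfl, mem_ideal_span_X_image] at this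
      simpa using this d hd
    rw [← f.support_sum_monomial_coeff]
    apply Ideal.sum_mem
    intro d hd
    have hgen : (∏ z ∈ d.support, X z : MvPolynomial σ K) ∈
        {m : MvPolynomial σ K |
          ∃ Y : Finset σ, (∀ i : Fin n, (Y ∩ Z i).Nonempty) ∧ m = ∏ z ∈ Y, X z} := by
      refine ⟨d.support, fun i => ?_, rfl⟩
      obtain ⟨z, hz, hz'⟩ := hsup d hd i
      exact ⟨z, Finset.mem_inter.mpr ⟨Finsupp.mem_support_iff.mpr hz', hz⟩⟩
    have hdvd : (∏ z ∈ d.support, X z : MvPolynomial σ K) ∣ monomial d (coeff d f) := by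
      rw [monomial_eq]
      refine Dvd.dvd.mul_left ?_ _
      refine Finset.prod_dvd_prod_of_dvd _ _ fun z hz => ?_
      exact dvd_pow_self _ (Finsupp.mem_support_iff.mp hz)
    obtain ⟨c, hc⟩ := hdvd
    rw [hc]
    exact Ideal.mul_mem_right _ _ (Ideal.subset_span hgen)
end

section
/- Let G be a k-connected finite simple graph on vertex set {1,…,ℓ}. Then for every j < k the homogeneous components of polynomial degree j satisfy D(A(G))_j = D(A(K_ℓ))_j; equivalently, a homogeneous derivation of polynomial degree less than k belongs to D(A(G)) if and only if it belongs to D(A(K_ℓ)). -/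
open MvPolynomial

noncomputable section

/-- The module `D(A(G))` of `A(G)`-derivations of a graphic arrangement:
derivations `θ` of `S = K[x_1,…,x_ℓ]` with `θ(x_i - x_j) ∈ (x_i - x_j)·S`
for every edge `{i,j}` of `G`. -/
def derModule (K : Type*) [Field K] (ℓ : ℕ) (G : SimpleGraph (Fin ℓ)) :
    Submodule (MvPolynomial (Fin ℓ) K)
      (Derivation K (MvPolynomial (Fin ℓ) K) (MvPolynomial (Fin ℓ) K)) where
  carrier := {θ | ∀ i j : Fin ℓ, G.Adj i j →
    θ (X i - X j) ∈ Ideal.span {(X i - X j : MvPolynomial (Fin ℓ) K)}}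
  add_mem' := fun ha hb i j hij => by
    simpa using add_mem (ha i j hij) (hb i j hij)
  zero_mem' := fun i j hij => by simp
  smul_mem' := fun c a ha i j hij => by
    simpa [smul_eq_mul] using Ideal.mul_mem_left _ c (ha i j hij)

/-- The derivation `θ_k = Σ_i x_i^k ∂_{x_i}`. -/
def theta (K : Type*) [Field K] (ℓ : ℕ) (k : ℕ) :
    Derivation K (MvPolynomial (Fin ℓ) K) (MvPolynomial (Fin ℓ) K) :=
  ∑ i : Fin ℓ, (X i ^ k : MvPolynomial (Fin ℓ) K) • pderiv i

/-- The separator-based derivation `θ_C^T = Σ_{i∈C} ∏_{t∈T} (x_i - x_t) ∂_{x_i}`. -/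
def sepDer (K : Type*) [Field K] (ℓ : ℕ) (T C : Finset (Fin ℓ)) :
    Derivation K (MvPolynomial (Fin ℓ) K) (MvPolynomial (Fin ℓ) K) :=
  ∑ i ∈ C, (∏ t ∈ T, (X i - X t : MvPolynomial (Fin ℓ) K)) • pderiv i

/-- The derivation `θ_C^{T,p} = Σ_{i∈C} ∏_{t∈T} (x_i - x_t)·p(x_i) ∂_{x_i}`
for a one-variable polynomial `p ∈ S[y]`. -/
def sepDerP (K : Type*) [Field K] (ℓ : ℕ) (T C : Finset (Fin ℓ))
    (p : Polynomial (MvPolynomial (Fin ℓ) K)) :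
    Derivation K (MvPolynomial (Fin ℓ) K) (MvPolynomial (Fin ℓ) K) :=
  ∑ i ∈ C, ((∏ t ∈ T, (X i - X t : MvPolynomial (Fin ℓ) K)) * p.eval (X i)) • pderiv i

/-- `T` separates the vertices `a` and `b` in `G`: `a, b ∉ T` and every
walk from `a` to `b` meets `T`. -/
def Separates {ℓ : ℕ} (G : SimpleGraph (Fin ℓ)) (T : Finset (Fin ℓ)) (a b : Fin ℓ) : Prop :=
  a ∉ T ∧ b ∉ T ∧ ∀ p : G.Walk a b, ∃ v ∈ p.support, v ∈ T

/-- `T` is a separator of `G`. -/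
def IsSeparator {ℓ : ℕ} (G : SimpleGraph (Fin ℓ)) (T : Finset (Fin ℓ)) : Prop :=
  ∃ a b, Separates G T a b

/-- `T` is a minimal separator of `G`: it is an `(a,b)`-separator for some `a, b`
and no proper subset separates `a` and `b`. -/
def IsMinimalSeparator {ℓ : ℕ} (G : SimpleGraph (Fin ℓ)) (T : Finset (Fin ℓ)) : Prop :=
  ∃ a b, Separates G T a b ∧ ∀ T' ⊂ T, ¬ Separates G T' a b

/-- `C` is (the vertex set of) a connected component of `G ∖ T`. -/
def IsCompOf {ℓ : ℕ} (G : SimpleGraph (Fin ℓ)) (T C : Finset (Fin ℓ)) : Prop :=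
  (∀ v ∈ C, v ∉ T) ∧ C.Nonempty ∧
  (G.induce (C : Set (Fin ℓ))).Connected ∧
  ∀ v ∈ C, ∀ w : Fin ℓ, w ∉ C → w ∉ T → ¬ G.Adj v w

/-- `G` is `k`-connected: `|V(G)| > k` and removing fewer than `k` vertices
leaves `G` connected. -/
def IsKConnected {ℓ : ℕ} (G : SimpleGraph (Fin ℓ)) (k : ℕ) : Prop :=
  k < ℓ ∧ ∀ X : Finset (Fin ℓ), X.card < k → (G.induce ((X : Set (Fin ℓ))ᶜ)).Connected

/-- A nonzero derivation is homogeneous of polynomial degree `p` if all its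
coefficients `θ(x_i)` are homogeneous of degree `p` (or zero). -/
def IsHomogeneousDer {K : Type*} [Field K] {ℓ : ℕ}
    (θ : Derivation K (MvPolynomial (Fin ℓ) K) (MvPolynomial (Fin ℓ) K)) (p : ℕ) : Prop :=
  θ ≠ 0 ∧ ∀ i : Fin ℓ, (θ (X i)).IsHomogeneous p

/-- A minimal generating set of `D(A(G))`: a finite set of homogeneous derivations
spanning `D(A(G))` over `S` such that no proper subset spans it. -/
def IsMinimalGenSet (K : Type*) [Field K] (ℓ : ℕ) (G : SimpleGraph (Fin ℓ))
    (Θ : Finset (Derivation K (MvPolynomial (Fin ℓ) K) (MvPolynomial (Fin ℓ) K))) : Prop :=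
  (∀ θ ∈ Θ, ∃ p : ℕ, IsHomogeneousDer θ p) ∧
  Submodule.span (MvPolynomial (Fin ℓ) K) (Θ : Set _) = derModule K ℓ G ∧
  ∀ Θ' ⊂ Θ, Submodule.span (MvPolynomial (Fin ℓ) K) (Θ' : Set _) ≠ derModule K ℓ G

section Stmt4Aux

variable {K : Type*} [Field K] {ℓ : ℕ}

/-- Substitution `X v ↦ X v + X a` (for `v ≠ a`), turning `X v - X a` into `X v`. -/
def bsub (K : Type*) [Field K] {ℓ : ℕ} (a : Fin ℓ) :
    MvPolynomial (Fin ℓ) K →ₐ[K] MvPolynomial (Fin ℓ) K :=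
  aeval (fun v => if v = a then X a else X v + X a)

/-- Substitution `X v ↦ X v - X a` (for `v ≠ a`), inverse to `bsub`. -/
def gsub (K : Type*) [Field K] {ℓ : ℕ} (a : Fin ℓ) :
    MvPolynomial (Fin ℓ) K →ₐ[K] MvPolynomial (Fin ℓ) K :=
  aeval (fun v => if v = a then X a else X v - X a)

lemma gsub_bsub (a : Fin ℓ) (p : MvPolynomial (Fin ℓ) K) :
    gsub K a (bsub K a p) = p := by
  have h : (gsub K a).comp (bsub K a) = AlgHom.id K (MvPolynomial (Fin ℓ) K) := by
    apply MvPolynomial.algHom_ext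
    intro v
    by_cases hv : v = a
    · simp [bsub, gsub, hv]
    · simp only [AlgHom.coe_comp, Function.comp_apply, AlgHom.coe_id, id_eq, bsub, gsub,
        aeval_X, if_neg hv, map_add, aeval_X, if_pos rfl, if_true, ite_true]
      ring
  calc gsub K a (bsub K a p) = ((gsub K a).comp (bsub K a)) p := rfl
    _ = p := by rw [h]; rfl

lemma bsub_homog (a : Fin ℓ) {p : MvPolynomial (Fin ℓ) K} {n : ℕ}
    (hp : p.IsHomogeneous n) : (bsub K a p).IsHomogeneous n := by
  have := hp.aeval (fun v => if v = a then (X a : MvPolynomial (Fin ℓ) K) else X v + X a)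
    (fun v => by
      by_cases hv : v = a
      · simpa [hv] using isHomogeneous_X K a
      · simp only [if_neg hv]
        exact (isHomogeneous_X K v).add (isHomogeneous_X K a))
  simpa [one_mul, bsub] using this

/-- Telescoping a derivation along a walk. -/
lemma walk_telescope (G : SimpleGraph (Fin ℓ))
    (θ : Derivation K (MvPolynomial (Fin ℓ) K) (MvPolynomial (Fin ℓ) K))
    (hθ : ∀ i j : Fin ℓ, G.Adj i j →
      θ (X i - X j) ∈ Ideal.span {(X i - X j : MvPolynomial (Fin ℓ) K)})
    (a : Fin ℓ) (U : Set (Fin ℓ)) :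
    ∀ {c d : Fin ℓ} (w : G.Walk c d), (∀ v ∈ w.support, v ∈ U) →
      θ (X c) - θ (X d) ∈
        Ideal.span ((fun v => (X v - X a : MvPolynomial (Fin ℓ) K)) '' U) := by
  intro c d w
  induction w with
  | nil =>
    intro _
    simpa using (Ideal.span _).zero_mem
  | @cons u v e h p ih =>
    intro hsupp
    have hu : u ∈ U := hsupp u (by simp)
    have hv : v ∈ U := hsupp v (by simp [SimpleGraph.Walk.support_cons])
    have ih' := ih (fun x hx => hsupp x (by simp [SimpleGraph.Walk.support_cons, hx]))
    have h1 : θ (X u - X v) ∈ Ideal.span {(X u - X v : MvPolynomial (Fin ℓ) K)} := hθ u v h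
    obtain ⟨q, hq⟩ := Ideal.mem_span_singleton.mp h1
    have hgen : (X u - X v : MvPolynomial (Fin ℓ) K) ∈
        Ideal.span ((fun v => (X v - X a : MvPolynomial (Fin ℓ) K)) '' U) := by
      have h2 : (X u - X v : MvPolynomial (Fin ℓ) K)
          = (X u - X a) - (X v - X a) := by ring
      rw [h2]
      exact Ideal.sub_mem _ (Ideal.subset_span ⟨u, hu, rfl⟩) (Ideal.subset_span ⟨v, hv, rfl⟩)
    have h3 : θ (X u) - θ (X v) ∈
        Ideal.span ((fun v => (X v - X a : MvPolynomial (Fin ℓ) K)) '' U) := by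
      have : θ (X u) - θ (X v) = (X u - X v) * q := by
        rw [← hq, map_sub]
      rw [this]
      exact Ideal.mul_mem_right _ _ hgen
    have : θ (X u) - θ (X e) = (θ (X u) - θ (X v)) + (θ (X v) - θ (X e)) := by ring
    rw [this]
    exact Ideal.add_mem _ h3 ih'

end Stmt4Aux

theorem stmt4 (K : Type*) [Field K] (ℓ : ℕ) (G : SimpleGraph (Fin ℓ)) (k : ℕ)
    (hG : IsKConnected G k) :
    ∀ j < k, ∀ θ : Derivation K (MvPolynomial (Fin ℓ) K) (MvPolynomial (Fin ℓ) K),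
      (∀ i : Fin ℓ, (θ (X i)).IsHomogeneous j) →
      (θ ∈ derModule K ℓ G ↔ θ ∈ derModule K ℓ (⊤ : SimpleGraph (Fin ℓ))) := by
  intro j hj θ hhom
  constructor
  · intro hθ a b hab
    have hne : a ≠ b := hab.ne
    -- f = θ (X a - X b), h = bsub a f
    set f : MvPolynomial (Fin ℓ) K := θ (X a) - θ (X b) with hfdef
    have hfθ : θ (X a - X b) = f := map_sub θ _ _
    rw [hfθ]
    set h : MvPolynomial (Fin ℓ) K := bsub K a f with hhdef
    -- h is homogeneous of degree j
    have hfj : f.IsHomogeneous j := (hhom a).sub (hhom b)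
    have hhj : h.IsHomogeneous j := bsub_homog a hfj
    -- main claim: every monomial of h involves b
    have hmem : h ∈ Ideal.span (X '' ({b} : Set (Fin ℓ)) : Set (MvPolynomial (Fin ℓ) K)) := by
      rw [mem_ideal_span_X_image]
      intro d hd
      refine ⟨b, Set.mem_singleton b, ?_⟩
      by_contra hdb
      -- degree bookkeeping
      have hdcoeff : coeff d h ≠ 0 := mem_support_iff.mp hd
      have hdeg : Finsupp.degree d = j := by
        have := hhj hdcoeff
        rw [Finsupp.degree_eq_weight_one]
        exact this
      have hcard : d.support.card ≤ j := by
        calc d.support.card = ∑ _i ∈ d.support, 1 := by simp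
          _ ≤ ∑ i ∈ d.support, d i :=
            Finset.sum_le_sum (fun i hi => Nat.one_le_iff_ne_zero.mpr (Finsupp.mem_support_iff.mp hi))
          _ = j := hdeg
      set Z : Finset (Fin ℓ) := d.support.erase a with hZdef
      have hZcard : Z.card < k :=
        lt_of_le_of_lt (le_trans (Finset.card_erase_le) hcard) hj
      have hconn := hG.2 Z hZcard
      have haZ : a ∈ ((Z : Set (Fin ℓ))ᶜ) := by simp [hZdef]
      have hbZ : b ∈ ((Z : Set (Fin ℓ))ᶜ) := by
        simp only [Set.mem_compl_iff, Finset.coe_erase, Set.mem_diff, Finset.mem_coe,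
          Finsupp.mem_support_iff, hZdef]
        intro hcon
        exact hcon.1 hdb
      obtain ⟨wi⟩ := hconn.preconnected ⟨a, haZ⟩ ⟨b, hbZ⟩
      -- map the walk to G
      set w : G.Walk a b :=
        wi.map (SimpleGraph.Embedding.induce ((Z : Set (Fin ℓ))ᶜ)).toHom with hwdef
      set U : Set (Fin ℓ) := ((Z : Set (Fin ℓ))ᶜ) with hUdef
      have hsupp : ∀ v ∈ w.support, v ∈ U := by
        intro v hv
        have hv : v ∈ (wi.map (SimpleGraph.Embedding.induce ((Z : Set (Fin ℓ))ᶜ)).toHom).support := hv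
        rw [SimpleGraph.Walk.support_map, List.mem_map] at hv
        obtain ⟨x, _, rfl⟩ := hv
        exact x.2
      -- f in the ideal generated by {X v - X a : v ∈ U}
      have hfI : f ∈ Ideal.span ((fun v => (X v - X a : MvPolynomial (Fin ℓ) K)) '' U) :=
        walk_telescope G θ hθ a U w hsupp
      -- push through bsub
      have hhI : h ∈ Ideal.span (X '' (U \ {a}) : Set (MvPolynomial (Fin ℓ) K)) := by
        have h1 : h ∈ Ideal.map (bsub K a)
            (Ideal.span ((fun v => (X v - X a : MvPolynomial (Fin ℓ) K)) '' U)) :=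
          Ideal.mem_map_of_mem _ hfI
        rw [Ideal.map_span] at h1
        refine Ideal.span_le.mpr ?_ h1
        rintro _ ⟨_, ⟨v, hvU, rfl⟩, rfl⟩
        by_cases hva : v = a
        · have : (bsub K a) (X v - X a) = 0 := by simp [bsub, hva]
          rw [this]; exact (Ideal.span _).zero_mem
        · have : (bsub K a) (X v - X a) = X v := by
            simp only [map_sub, bsub, aeval_X, if_neg hva, if_pos rfl, if_true, ite_true]
            ring
          rw [this]
          exact Ideal.subset_span ⟨v, ⟨hvU, hva⟩, rfl⟩
      -- contradiction
      obtain ⟨v, ⟨hvU, hva⟩, hdv⟩ := mem_ideal_span_X_image.mp hhI d hd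
      have : v ∈ Z := Finset.mem_erase.mpr ⟨hva, Finsupp.mem_support_iff.mpr hdv⟩
      exact hvU this
    -- back to f
    rw [Set.image_singleton, Ideal.mem_span_singleton] at hmem
    obtain ⟨q, hq⟩ := hmem
    rw [Ideal.mem_span_singleton]
    refine ⟨-(gsub K a q), ?_⟩
    have hf : f = gsub K a h := (gsub_bsub a f).symm
    have hXb : gsub K a (X b : MvPolynomial (Fin ℓ) K) = X b - X a := by
      simp [gsub, if_neg (Ne.symm hne)]
    rw [hf, hq, map_mul, hXb]
    ring
  · intro hθ i j' hij
    exact hθ i j' (by simp [hij.ne])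
end
end

section
/- Let G be a finite simple graph, T a separator of G, and C a connected component of G ∖ T. Then the separator-based derivation θ_C^T = Σ_{i∈C} ∏_{t∈T}(x_i − x_t) ∂_{x_i} belongs to the derivation module D(A(G)). -/
open MvPolynomial

noncomputable section

private lemma sum_der_apply {K : Type*} [Field K] {ℓ : ℕ} (C : Finset (Fin ℓ))
    (g : Fin ℓ → MvPolynomial (Fin ℓ) K) (x : MvPolynomial (Fin ℓ) K) :
    (∑ k ∈ C, g k • pderiv k) x = ∑ k ∈ C, g k * pderiv k x := by
  induction C using Finset.induction with
  | empty => simp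
  | insert _ _ h ih => simp [Finset.sum_insert h, ih]

theorem stmt5 (K : Type*) [Field K] (ℓ : ℕ) (G : SimpleGraph (Fin ℓ))
    (T C : Finset (Fin ℓ)) (hT : IsSeparator G T) (hC : IsCompOf G T C) :
    sepDer K ℓ T C ∈ derModule K ℓ G := by
  intro i j hij
  rw [Ideal.mem_span_singleton]
  set f : Fin ℓ → MvPolynomial (Fin ℓ) K := fun k => ∏ t ∈ T, (X k - X t) with hf
  have hsum : sepDer K ℓ T C (X i - X j)
      = (if i ∈ C then f i else 0) - (if j ∈ C then f j else 0) := by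
    have : sepDer K ℓ T C (X i - X j)
        = ∑ k ∈ C, f k * ((if i = k then 1 else 0) - (if j = k then 1 else 0)) := by
      rw [sepDer, sum_der_apply]
      refine Finset.sum_congr rfl fun k _ => ?_
      rw [map_sub, pderiv_X, pderiv_X, Pi.single_apply, Pi.single_apply]
    rw [this]
    simp only [mul_sub, Finset.sum_sub_distrib, mul_ite, mul_one, mul_zero]
    rw [Finset.sum_ite_eq C i f, Finset.sum_ite_eq C j f]
  rw [hsum]
  by_cases hi : i ∈ C <;> by_cases hj : j ∈ C <;> simp only [hi, hj, if_true, if_false]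
  · -- both in C: f i - f j divisible
    have := Polynomial.sub_dvd_eval_sub (X i) (X j)
      (∏ t ∈ T, (Polynomial.X - Polynomial.C (X t)) : Polynomial (MvPolynomial (Fin ℓ) K))
    simpa [Polynomial.eval_prod, hf] using this
  · -- i ∈ C, j ∉ C : then j ∈ T
    have hjT : j ∈ T := by
      by_contra hjT
      exact hC.2.2.2 i hi j hj hjT hij
    have : (X i - X j) ∣ f i := Finset.dvd_prod_of_mem _ hjT
    simpa using this
  · -- j ∈ C, i ∉ C : then i ∈ T
    have hiT : i ∈ T := by
      by_contra hiT
      exact hC.2.2.2 j hj i hi hiT hij.symm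
    have h1 : (X j - X i) ∣ f j := Finset.dvd_prod_of_mem _ hiT
    have h2 : (X i - X j : MvPolynomial (Fin ℓ) K) ∣ f j := by
      rw [← neg_sub (X j : MvPolynomial (Fin ℓ) K) (X i)]
      exact (neg_dvd).mpr h1
    rw [zero_sub]
    exact dvd_neg.mpr h2
  · simp
end
end

section
/- Let G be a finite simple graph, T a minimal separator of G, and C a connected component of G ∖ T with |C| = k. Fix an ordering v_1,…,v_k of the vertices of C and form the associated descending chain with sets C_i = {v_1,…,v_i} and T_i = (∪_{j=1}^i N(v_j)) ∖ C_i. Then for every one-variable polynomial p ∈ S[y], the derivation θ_C^{T,p} lies in the S-submodule generated by the derivations θ_{C_1}^{T_1}, …, θ_{C_k}^{T_k}. -/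
open MvPolynomial

noncomputable section

/-- For an ordering `v_1,…,v_k` of a component, `C_i = {v_1,…,v_i}`. -/
def chainC {ℓ : ℕ} {k : ℕ} (v : Fin k → Fin ℓ) (i : Fin k) : Finset (Fin ℓ) :=
  Finset.image v (Finset.univ.filter (· ≤ i))

/-- For an ordering `v_1,…,v_k` of a component, `T_i = (∪_{j ≤ i} N(v_j)) ∖ C_i`. -/
def chainT {ℓ : ℕ} (G : SimpleGraph (Fin ℓ)) [DecidableRel G.Adj] {k : ℕ}
    (v : Fin k → Fin ℓ) (i : Fin k) : Finset (Fin ℓ) :=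
  ((Finset.univ.filter (· ≤ i)).biUnion fun j => G.neighborFinset (v j)) \ chainC v i


/-- Key algebraic step: pulling out the new vertex `a` of the chain. -/
lemma sepDerP_insert (K : Type*) [Field K] (ℓ : ℕ) (Ti Tj Cj : Finset (Fin ℓ)) (a : Fin ℓ)
    (haC : a ∉ Cj) (haT : a ∉ Ti) (hTsub : Tj ⊆ insert a Ti)
    (p : Polynomial (MvPolynomial (Fin ℓ) K)) :
    ∃ q, sepDerP K ℓ Ti (insert a Cj) p =
      Polynomial.eval (X a) p • sepDer K ℓ Ti (insert a Cj) + sepDerP K ℓ Tj Cj q := by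
  obtain ⟨r, hr⟩ := Polynomial.X_sub_C_dvd_sub_C_eval (a := (X a : MvPolynomial (Fin ℓ) K)) (p := p)
  refine ⟨(∏ t ∈ (insert a Ti) \ Tj, (Polynomial.X - Polynomial.C (X t))) * r, ?_⟩
  unfold sepDerP sepDer
  rw [Finset.smul_sum, Finset.sum_insert haC, Finset.sum_insert haC, add_assoc, ← Finset.sum_add_distrib]
  rw [smul_smul, mul_comm]
  congr 1
  refine Finset.sum_congr rfl fun w hw => ?_
  rw [smul_smul, ← add_smul]
  congr 1
  have h1 : Polynomial.eval (X w : MvPolynomial (Fin ℓ) K) p - Polynomial.eval (X a) p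
      = (X w - X a) * Polynomial.eval (X w) r := by
    have := congrArg (Polynomial.eval (X w : MvPolynomial (Fin ℓ) K)) hr
    simpa using this
  have h2 : (∏ t ∈ (insert a Ti) \ Tj, ((X w : MvPolynomial (Fin ℓ) K) - X t))
      * ∏ t ∈ Tj, ((X w : MvPolynomial (Fin ℓ) K) - X t)
      = (X w - X a) * ∏ t ∈ Ti, ((X w : MvPolynomial (Fin ℓ) K) - X t) := by
    rw [Finset.prod_sdiff hTsub, Finset.prod_insert haT]
  rw [Polynomial.eval_mul, Polynomial.eval_prod]
  simp only [Polynomial.eval_sub, Polynomial.eval_X, Polynomial.eval_C]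
  linear_combination (∏ t ∈ Ti, ((X w : MvPolynomial (Fin ℓ) K) - X t)) * h1
    - Polynomial.eval (X w) r * h2

lemma chain_mem (K : Type*) [Field K] (ℓ : ℕ) (G : SimpleGraph (Fin ℓ)) [DecidableRel G.Adj]
    (k : ℕ) (v : Fin k → Fin ℓ) (hv : Function.Injective v) :
    ∀ (n : ℕ) (hn : n < k) (p : Polynomial (MvPolynomial (Fin ℓ) K)),
      sepDerP K ℓ (chainT G v ⟨n, hn⟩) (chainC v ⟨n, hn⟩) p ∈
        Submodule.span (MvPolynomial (Fin ℓ) K)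
          (Set.range fun i : Fin k => sepDer K ℓ (chainT G v i) (chainC v i)) := by
  intro n
  induction n with
  | zero =>
    intro hn p
    have hC0 : chainC v ⟨0, hn⟩ = {v ⟨0, hn⟩} := by
      unfold chainC
      rw [show Finset.univ.filter (· ≤ (⟨0, hn⟩ : Fin k)) = {⟨0, hn⟩} by
        ext m; simp [Fin.le_def, Nat.le_zero, Fin.ext_iff]]
      simp
    have : sepDerP K ℓ (chainT G v ⟨0, hn⟩) (chainC v ⟨0, hn⟩) p
        = Polynomial.eval (X (v ⟨0, hn⟩)) p • sepDer K ℓ (chainT G v ⟨0, hn⟩) (chainC v ⟨0, hn⟩) := by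
      unfold sepDerP sepDer
      rw [hC0, Finset.sum_singleton, Finset.sum_singleton, smul_smul, mul_comm]
    rw [this]
    exact Submodule.smul_mem _ _ (Submodule.subset_span ⟨⟨0, hn⟩, rfl⟩)
  | succ m ih =>
    intro hn p
    set i : Fin k := ⟨m + 1, hn⟩ with hi
    set j : Fin k := ⟨m, Nat.lt_of_succ_lt hn⟩ with hj
    have hfilter : Finset.univ.filter (· ≤ i) = insert i (Finset.univ.filter (· ≤ j)) := by
      ext w
      simp only [Finset.mem_filter, Finset.mem_univ, true_and, Finset.mem_insert]
      constructor
      · intro h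
        rcases Nat.lt_or_ge w.1 (m+1) with h' | h'
        · right; exact Nat.lt_succ_iff.mp h'
        · left; exact Fin.ext (le_antisymm h h')
      · rintro (rfl | h)
        · exact le_refl _
        · exact le_trans h (show j ≤ i from Fin.mk_le_mk.mpr (Nat.le_succ m))
    have hCins : chainC v i = insert (v i) (chainC v j) := by
      unfold chainC; rw [hfilter, Finset.image_insert]
    have haC : v i ∉ chainC v j := by
      unfold chainC
      simp only [Finset.mem_image, Finset.mem_filter, Finset.mem_univ, true_and, not_exists]
      rintro w ⟨hw, hwe⟩
      have := hv hwe
      subst this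
      exact absurd (Fin.le_def.mp hw) (Nat.not_succ_le_self m)
    have haCi : v i ∈ chainC v i := by
      rw [hCins]; exact Finset.mem_insert_self _ _
    have haT : v i ∉ chainT G v i := Finset.notMem_sdiff_of_mem_right haCi
    have hTsub : chainT G v j ⊆ insert (v i) (chainT G v i) := by
      intro t ht
      unfold chainT at ht
      rw [Finset.mem_sdiff] at ht
      obtain ⟨ht1, ht2⟩ := ht
      by_cases hta : t = v i
      · exact hta ▸ Finset.mem_insert_self _ _
      · refine Finset.mem_insert_of_mem ?_
        unfold chainT
        rw [Finset.mem_sdiff]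
        constructor
        · rw [Finset.mem_biUnion] at ht1 ⊢
          obtain ⟨w, hw1, hw2⟩ := ht1
          exact ⟨w, by
            simp only [Finset.mem_filter, Finset.mem_univ, true_and] at hw1 ⊢
            exact le_trans hw1 (show j ≤ i from Fin.mk_le_mk.mpr (Nat.le_succ m)), hw2⟩
        · rw [hCins, Finset.mem_insert]
          push_neg
          exact ⟨hta, ht2⟩
    obtain ⟨q, hq⟩ := sepDerP_insert K ℓ (chainT G v i) (chainT G v j) (chainC v j)
      (v i) haC haT hTsub p
    have hq2 : sepDerP K ℓ (chainT G v i) (chainC v i) p =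
        Polynomial.eval (X (v i)) p • sepDer K ℓ (chainT G v i) (chainC v i)
          + sepDerP K ℓ (chainT G v j) (chainC v j) q := by
      rw [hCins]; exact hq
    rw [hq2]
    exact add_mem (Submodule.smul_mem _ _ (Submodule.subset_span ⟨i, rfl⟩))
      (ih (Nat.lt_of_succ_lt hn) q)

theorem stmt7 (K : Type*) [Field K] (ℓ : ℕ) (G : SimpleGraph (Fin ℓ)) [DecidableRel G.Adj]
    (T C : Finset (Fin ℓ)) (hT : IsMinimalSeparator G T) (hC : IsCompOf G T C)
    (k : ℕ) (hk : C.card = k) (v : Fin k → Fin ℓ) (hv : Function.Injective v)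
    (hvC : Finset.image v Finset.univ = C) :
    ∀ p : Polynomial (MvPolynomial (Fin ℓ) K),
      sepDerP K ℓ T C p ∈ Submodule.span (MvPolynomial (Fin ℓ) K)
        (Set.range fun i : Fin k => sepDer K ℓ (chainT G v i) (chainC v i)) := by
  intro p
  have hk0 : 0 < k := hk ▸ Finset.card_pos.mpr hC.2.1
  set i : Fin k := ⟨k - 1, by omega⟩ with hi
  have hCi : chainC v i = C := by
    unfold chainC
    rw [show Finset.univ.filter (· ≤ i) = Finset.univ by
      ext m; simp only [Finset.mem_filter, Finset.mem_univ, true_and, iff_true]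
      simp only [Fin.le_def]; show m.val ≤ k - 1; omega]
    exact hvC
  have hTsub : chainT G v i ⊆ T := by
    intro t ht
    unfold chainT at ht
    rw [Finset.mem_sdiff, Finset.mem_biUnion] at ht
    obtain ⟨⟨w, _, hw2⟩, ht2⟩ := ht
    rw [SimpleGraph.mem_neighborFinset] at hw2
    have hwC : v w ∈ C := by
      rw [← hvC]; exact Finset.mem_image_of_mem v (Finset.mem_univ w)
    rw [hCi] at ht2
    by_contra htT
    exact hC.2.2.2 (v w) hwC t ht2 htT hw2
  have key : sepDerP K ℓ T C p = sepDerP K ℓ (chainT G v i) (chainC v i)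
      ((∏ t ∈ T \ chainT G v i, (Polynomial.X - Polynomial.C (X t))) * p) := by
    unfold sepDerP
    rw [hCi]
    refine Finset.sum_congr rfl fun w hw => ?_
    congr 1
    rw [Polynomial.eval_mul, Polynomial.eval_prod]
    simp only [Polynomial.eval_sub, Polynomial.eval_X, Polynomial.eval_C]
    rw [← Finset.prod_sdiff hTsub]
    ring
  rw [key]
  exact chain_mem K ℓ G k v hv (k - 1) (by omega) _
end
end

section
/- Let G be a connected finite simple graph and let T' and T be minimal separators of G with T' a proper subset of T. Then some connected component of G ∖ T is also a connected component of G ∖ T'; that is, 𝒞(T') ∩ 𝒞(T) ≠ ∅. -/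
open SimpleGraph

namespace Stmt13Aux

variable {ℓ : ℕ}

/-- The graph `G` with the vertices of `T` (effectively) deleted. -/
def del (G : SimpleGraph (Fin ℓ)) (T : Finset (Fin ℓ)) : SimpleGraph (Fin ℓ) where
  Adj x y := G.Adj x y ∧ x ∉ T ∧ y ∉ T
  symm := ⟨fun x y ⟨h, hx, hy⟩ => ⟨h.symm, hy, hx⟩⟩
  loopless := ⟨fun x ⟨h, _, _⟩ => G.loopless.irrefl x h⟩

lemma del_le (G : SimpleGraph (Fin ℓ)) (T : Finset (Fin ℓ)) : del G T ≤ G :=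
  fun _ _ h => h.1

lemma del_mono {G : SimpleGraph (Fin ℓ)} {T' T : Finset (Fin ℓ)} (h : T' ⊆ T) :
    del G T ≤ del G T' :=
  fun _ _ ⟨ha, hu, hv⟩ => ⟨ha, fun H => hu (h H), fun H => hv (h H)⟩

/-- The component of `a` in `G ∖ T`. -/
noncomputable def comp (G : SimpleGraph (Fin ℓ)) (T : Finset (Fin ℓ)) (a : Fin ℓ) :
    Finset (Fin ℓ) :=
  @Finset.filter _ (fun w => w ∉ T ∧ (del G T).Reachable a w) (Classical.decPred _) Finset.univ

lemma mem_comp {G : SimpleGraph (Fin ℓ)} {T : Finset (Fin ℓ)} {a w : Fin ℓ} :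
    w ∈ comp G T a ↔ w ∉ T ∧ (del G T).Reachable a w := by
  classical
  simp [comp, Finset.mem_filter]

lemma walk_support_not_mem {G : SimpleGraph (Fin ℓ)} {T : Finset (Fin ℓ)} :
    ∀ {u v : Fin ℓ} (p : (del G T).Walk u v), u ∉ T → ∀ w ∈ p.support, w ∉ T := by
  intro u v p
  induction p with
  | nil =>
    intro hu w hw
    rw [Walk.support_nil, List.mem_singleton] at hw
    exact hw ▸ hu
  | cons h q ih =>
    intro hu w hw
    rw [Walk.support_cons] at hw
    rcases List.mem_cons.mp hw with rfl | hw
    · exact hu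
    · exact ih h.2.2 w hw

lemma induced_reachable {G : SimpleGraph (Fin ℓ)} {T : Finset (Fin ℓ)} {S : Finset (Fin ℓ)} :
    ∀ {u v : Fin ℓ} (p : (del G T).Walk u v) (hS : ∀ w ∈ p.support, w ∈ S),
      (G.induce (S : Set (Fin ℓ))).Reachable
        ⟨u, hS u p.start_mem_support⟩ ⟨v, hS v p.end_mem_support⟩ := by
  intro u v p
  induction p with
  | nil => intro hS; rfl
  | @cons u c v h q ih =>
    intro hS
    have hu : u ∈ S := hS u (by simp)
    have hc : c ∈ S := hS c (by rw [Walk.support_cons]; exact List.mem_cons_of_mem _ q.start_mem_support)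
    have hadj : (G.induce (S : Set (Fin ℓ))).Adj ⟨u, hu⟩ ⟨c, hc⟩ := h.1
    exact hadj.reachable.trans (ih (fun w hw => hS w (by rw [Walk.support_cons]; exact List.mem_cons_of_mem _ hw)))

lemma comp_isCompOf {G : SimpleGraph (Fin ℓ)} {T : Finset (Fin ℓ)} {a : Fin ℓ} (ha : a ∉ T) :
    IsCompOf G T (comp G T a) := by
  have hamem : a ∈ comp G T a := mem_comp.mpr ⟨ha, Reachable.refl a⟩
  haveI : Nonempty ((comp G T a : Set (Fin ℓ))) := ⟨⟨a, Finset.mem_coe.mpr hamem⟩⟩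
  refine ⟨fun v hv => (mem_comp.mp hv).1, ⟨a, hamem⟩, ⟨?_⟩, ?_⟩
  · intro u v
    obtain ⟨u, hu⟩ := u
    obtain ⟨v, hv⟩ := v
    have hu' : u ∈ comp G T a := Finset.mem_coe.mp hu
    have hv' : v ∈ comp G T a := Finset.mem_coe.mp hv
    obtain ⟨huT, hru⟩ := mem_comp.mp hu'
    obtain ⟨hvT, hrv⟩ := mem_comp.mp hv'
    obtain ⟨p⟩ := hru.symm.trans hrv
    have hS : ∀ w ∈ p.support, w ∈ comp G T a := by
      intro w hw
      exact mem_comp.mpr ⟨walk_support_not_mem p huT w hw,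
        hru.trans ⟨p.takeUntil w hw⟩⟩
    exact induced_reachable p hS
  · intro v hv w hw hwT hadj
    obtain ⟨hvT, hrv⟩ := mem_comp.mp hv
    exact hw (mem_comp.mpr ⟨hwT, hrv.trans (Adj.reachable ⟨hadj, hvT, hwT⟩)⟩)

lemma not_reachable_of_separates {G : SimpleGraph (Fin ℓ)} {S : Finset (Fin ℓ)} {x y : Fin ℓ}
    (h : Separates G S x y) : ¬ (del G S).Reachable x y := by
  rintro ⟨p⟩
  have hedges : ∀ e ∈ p.edges, e ∈ G.edgeSet := fun e he =>
    SimpleGraph.edgeSet_mono (del_le G S) (p.edges_subset_edgeSet he)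
  obtain ⟨v, hv, hvS⟩ := h.2.2 (p.transfer G hedges)
  rw [Walk.support_transfer] at hv
  exact walk_support_not_mem p h.1 v hv hvS

lemma exists_nbr' {G : SimpleGraph (Fin ℓ)} {T : Finset (Fin ℓ)} :
    ∀ {a t : Fin ℓ} (q : G.Walk a t), t ∈ T → a ∉ T →
      (∀ v ∈ q.support, v = t ∨ v ∉ T) →
      ∃ w, w ∉ T ∧ (del G T).Reachable a w ∧ G.Adj w t := by
  intro a t q
  induction q with
  | nil => intro ht ha _; exact absurd ht ha
  | @cons a c t h q ih =>
    intro ht ha hsup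
    by_cases hct : c = t
    · subst hct
      exact ⟨a, ha, Reachable.refl a, h⟩
    · have hcmem : c ∈ (Walk.cons h q).support := by
        rw [Walk.support_cons]; exact List.mem_cons_of_mem _ q.start_mem_support
      have hc : c ∉ T := by
        rcases hsup c hcmem with rfl | h'
        · exact absurd rfl hct
        · exact h'
      obtain ⟨w, hw, hr, hadj⟩ := ih ht hc (fun v hv => hsup v
        (by rw [Walk.support_cons]; exact List.mem_cons_of_mem _ hv))
      exact ⟨w, hw, (Adj.reachable (⟨h, ha, hc⟩ : (del G T).Adj a c)).trans hr, hadj⟩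

lemma exists_nbr_comp {G : SimpleGraph (Fin ℓ)} {T : Finset (Fin ℓ)} {a b t : Fin ℓ}
    (hsep : Separates G T a b) (hmin : ∀ T'' ⊂ T, ¬ Separates G T'' a b) (ht : t ∈ T) :
    ∃ w, w ∈ comp G T a ∧ G.Adj w t := by
  classical
  have ha : a ∉ T := hsep.1
  have hb : b ∉ T := hsep.2.1
  have h1 := hmin (T.erase t) (Finset.erase_ssubset ht)
  rw [Separates] at h1
  push_neg at h1
  obtain ⟨p, hp⟩ := h1 (fun h => ha (Finset.mem_of_mem_erase h))
    (fun h => hb (Finset.mem_of_mem_erase h))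
  obtain ⟨v, hv, hvT⟩ := hsep.2.2 p
  have hvt : v = t := by
    by_contra hne
    exact hp v hv (Finset.mem_erase.mpr ⟨hne, hvT⟩)
  have htp : t ∈ p.support := hvt ▸ hv
  have hq : ∀ u ∈ (p.takeUntil t htp).support, u = t ∨ u ∉ T := by
    intro u hu
    by_cases hut : u = t
    · exact Or.inl hut
    · refine Or.inr fun huT => ?_
      exact hp u (Walk.support_takeUntil_subset p htp hu) (Finset.mem_erase.mpr ⟨hut, huT⟩)
  obtain ⟨w, hw, hr, hadj⟩ := exists_nbr' (p.takeUntil t htp) ht ha hq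
  exact ⟨w, mem_comp.mpr ⟨hw, hr⟩, hadj⟩

end Stmt13Aux

open Stmt13Aux

theorem stmt13 (ℓ : ℕ) (G : SimpleGraph (Fin ℓ)) (hG : G.Connected)
    (T' T : Finset (Fin ℓ)) (hT' : IsMinimalSeparator G T') (hT : IsMinimalSeparator G T)
    (hss : T' ⊂ T) :
    ∃ C : Finset (Fin ℓ), IsCompOf G T C ∧ IsCompOf G T' C := by
  classical
  obtain ⟨a, b, hsep, hmin⟩ := hT
  obtain ⟨a', b', hsep', _⟩ := hT'
  have hsub : T' ⊆ T := hss.subset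
  have haT : a ∉ T := hsep.1
  have haT' : a ∉ T' := fun h => haT (hsub h)
  -- every vertex of T \ T' is reachable from a in G ∖ T'
  have key : ∀ t ∈ T, t ∉ T' → (del G T').Reachable a t := by
    intro t htT htT'
    obtain ⟨w, hw, hadj⟩ := exists_nbr_comp hsep hmin htT
    obtain ⟨hwT, hr⟩ := mem_comp.mp hw
    have hwT' : w ∉ T' := fun h => hwT (hsub h)
    exact (SimpleGraph.Reachable.mono (del_mono hsub) hr).trans
      (SimpleGraph.Adj.reachable ⟨hadj, hwT', htT'⟩)
  have hnr : ¬ (del G T').Reachable a' b' := not_reachable_of_separates hsep'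
  obtain ⟨c, hcT', hnc⟩ : ∃ c, c ∉ T' ∧ ¬ (del G T').Reachable a c := by
    by_cases h : (del G T').Reachable a a'
    · exact ⟨b', hsep'.2.1, fun h2 => hnr (h.symm.trans h2)⟩
    · exact ⟨a', hsep'.1, h⟩
  have hC' : IsCompOf G T' (comp G T' c) := comp_isCompOf hcT'
  have hCT : ∀ v ∈ comp G T' c, v ∉ T := by
    intro v hv hvT
    obtain ⟨hvT', hrc⟩ := mem_comp.mp hv
    exact hnc ((key v hvT hvT').trans hrc.symm)
  refine ⟨comp G T' c, ⟨hCT, hC'.2.1, hC'.2.2.1, ?_⟩, hC'⟩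
  intro v hv w hw hwT hadj
  obtain ⟨hvT', hrc⟩ := mem_comp.mp hv
  have hwT' : w ∉ T' := fun h => hwT (hsub h)
  exact hw (mem_comp.mpr ⟨hwT', hrc.trans (SimpleGraph.Adj.reachable ⟨hadj, hvT', hwT'⟩)⟩)
end

section
/- Let G be a connected finite simple graph possessing at least one minimal separator, let d be the maximal degree in the derivation degree sequence of a minimal generating set of D(A(G)), and let t_max be the maximal cardinality of a minimal separator of G. Then d ≥ t_max. -/
open MvPolynomial

noncomputable section

/-! ### Auxiliary lemmas -/

section Aux

variable {K : Type*} [Field K] {ℓ : ℕ}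

lemma der_sum_apply {ι : Type*} (s : Finset ι)
    (D : ι → Derivation K (MvPolynomial (Fin ℓ) K) (MvPolynomial (Fin ℓ) K))
    (x : MvPolynomial (Fin ℓ) K) :
    (∑ i ∈ s, D i) x = ∑ i ∈ s, D i x := by
  classical
  induction s using Finset.cons_induction with
  | empty => simp
  | cons i s hi ih => rw [Finset.sum_cons, Finset.sum_cons, Derivation.add_apply, ih]

lemma sepDer_apply_X (T C : Finset (Fin ℓ)) (v : Fin ℓ) :
    sepDer K ℓ T C (X v) =
      if v ∈ C then ∏ t ∈ T, (X v - X t : MvPolynomial (Fin ℓ) K) else 0 := by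
  classical
  rw [sepDer, der_sum_apply]
  simp only [Derivation.smul_apply, smul_eq_mul, pderiv_X, Pi.single_apply, mul_ite,
    mul_one, mul_zero, Finset.sum_ite_eq]

lemma sepDer_mem (G : SimpleGraph (Fin ℓ)) (T C : Finset (Fin ℓ))
    (hcl : ∀ v ∈ C, ∀ w, G.Adj v w → w ∉ T → w ∈ C) :
    sepDer K ℓ T C ∈ derModule K ℓ G := by
  classical
  intro i j hij
  rw [Ideal.mem_span_singleton, Derivation.map_sub, sepDer_apply_X, sepDer_apply_X]
  by_cases hi : i ∈ C <;> by_cases hj : j ∈ C <;> simp only [hi, hj, if_true, if_false]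
  · have := Polynomial.sub_dvd_eval_sub (X i) (X j)
      (∏ t ∈ T, (Polynomial.X - Polynomial.C (X t)) :
        Polynomial (MvPolynomial (Fin ℓ) K))
    simpa [Polynomial.eval_prod] using this
  · have hjT : j ∈ T := by
      by_contra h; exact hj (hcl i hi j hij h)
    simpa using Finset.dvd_prod_of_mem (fun t => (X i - X t : MvPolynomial (Fin ℓ) K)) hjT
  · have hiT : i ∈ T := by
      by_contra h; exact hi (hcl j hj i hij.symm h)
    have : (X i - X j : MvPolynomial (Fin ℓ) K) ∣ ∏ t ∈ T, (X j - X t) := by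
      have h1 : (X i - X j : MvPolynomial (Fin ℓ) K) ∣ X j - X i :=
        dvd_sub_comm.mp dvd_rfl
      exact h1.trans (Finset.dvd_prod_of_mem (fun t => (X j - X t : MvPolynomial (Fin ℓ) K)) hiT)
    simpa using dvd_neg.mpr this
  · simp

lemma walk_transport {G : SimpleGraph (Fin ℓ)}
    {η : Derivation K (MvPolynomial (Fin ℓ) K) (MvPolynomial (Fin ℓ) K)}
    (hη : ∀ i j : Fin ℓ, G.Adj i j →
      η (X i - X j) ∈ Ideal.span {(X i - X j : MvPolynomial (Fin ℓ) K)})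
    {R : Type*} [CommRing R] (ν : MvPolynomial (Fin ℓ) K →+* R)
    {u v : Fin ℓ} (W : G.Walk u v)
    (hW : ∀ i ∈ W.support, ∀ j ∈ W.support, G.Adj i j → ν (X i - X j) = 0) :
    ν (η (X u)) = ν (η (X v)) := by
  induction W with
  | nil => rfl
  | @cons u w v h W ih =>
    have hus : u ∈ (SimpleGraph.Walk.cons h W).support :=
      SimpleGraph.Walk.start_mem_support _
    have hsub : ∀ x ∈ W.support, x ∈ (SimpleGraph.Walk.cons h W).support := by
      intro x hx
      rw [SimpleGraph.Walk.support_cons]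
      exact List.mem_cons_of_mem _ hx
    have hws : w ∈ (SimpleGraph.Walk.cons h W).support :=
      hsub w (SimpleGraph.Walk.start_mem_support _)
    have h1 : ν (η (X u)) = ν (η (X w)) := by
      obtain ⟨g, hg⟩ := Ideal.mem_span_singleton.1 (hη u w h)
      have hsub2 : η (X u) - η (X w) = (X u - X w) * g := by
        rw [← hg, Derivation.map_sub]
      have h0 : ν (X u - X w) = 0 := hW u hus w hws h
      have h2 := congrArg ν hsub2
      rw [map_sub, map_mul, h0, zero_mul, sub_eq_zero] at h2
      exact h2
    rw [h1]
    exact ih fun i hi j hj hadj => hW i (hsub i hi) j (hsub j hj) hadj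

lemma natDegree_aeval_le (g : Fin ℓ → Polynomial (MvPolynomial (Fin ℓ) K))
    (hg : ∀ v, (g v).natDegree ≤ 1) (φ : MvPolynomial (Fin ℓ) K) :
    (aeval g φ).natDegree ≤ φ.totalDegree := by
  classical
  conv_lhs => rw [φ.as_sum, map_sum]
  apply Polynomial.natDegree_sum_le_of_forall_le
  intro dd hdd
  rw [aeval_monomial]
  refine Polynomial.natDegree_mul_le.trans ?_
  rw [Polynomial.algebraMap_apply, Polynomial.natDegree_C, zero_add]
  refine le_trans ?_ (MvPolynomial.le_totalDegree hdd)
  rw [Finsupp.prod, Finsupp.sum]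
  refine (Polynomial.natDegree_prod_le _ _).trans ?_
  refine Finset.sum_le_sum fun v _ => ?_
  refine (Polynomial.natDegree_pow_le).trans ?_
  calc dd v * (g v).natDegree ≤ dd v * 1 := Nat.mul_le_mul_left _ (hg v)
    _ = dd v := Nat.mul_one _

end Aux

theorem stmt15 (K : Type*) [Field K] (ℓ : ℕ) (G : SimpleGraph (Fin ℓ)) (hG : G.Connected)
    (hsep : ∃ T : Finset (Fin ℓ), IsMinimalSeparator G T)
    (Θ : Finset (Derivation K (MvPolynomial (Fin ℓ) K) (MvPolynomial (Fin ℓ) K)))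
    (hΘ : IsMinimalGenSet K ℓ G Θ)
    (d : ℕ) (hd : IsGreatest {p : ℕ | ∃ θ ∈ Θ, IsHomogeneousDer θ p} d)
    (tmax : ℕ)
    (htmax : IsGreatest {m : ℕ | ∃ T : Finset (Fin ℓ), IsMinimalSeparator G T ∧ T.card = m}
      tmax) :
    tmax ≤ d := by
  classical
  by_contra hlt
  push_neg at hlt
  obtain ⟨⟨T, hTmin, hTcard⟩, -⟩ := htmax
  obtain ⟨a, b, hS, hmin⟩ := hTmin
  -- the component of `a` in `G ∖ T`
  set C : Finset (Fin ℓ) := Finset.univ.filter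
    (fun v => ∃ W : G.Walk a v, ∀ x ∈ W.support, x ∉ T) with hCdef
  have hmemC : ∀ v, v ∈ C ↔ ∃ W : G.Walk a v, ∀ x ∈ W.support, x ∉ T := by
    intro v; simp [hCdef]
  have haC : a ∈ C := by
    refine (hmemC a).2 ⟨SimpleGraph.Walk.nil, ?_⟩
    intro x hx
    rw [SimpleGraph.Walk.support_nil, List.mem_singleton] at hx
    subst hx; exact hS.1
  have hbC : b ∉ C := by
    intro hb
    obtain ⟨W, hW⟩ := (hmemC b).1 hb
    obtain ⟨v, hv, hvT⟩ := hS.2.2 W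
    exact hW v hv hvT
  have hcl : ∀ v ∈ C, ∀ w, G.Adj v w → w ∉ T → w ∈ C := by
    intro v hv w hadj hwT
    obtain ⟨W, hW⟩ := (hmemC v).1 hv
    refine (hmemC w).2 ⟨W.concat hadj, ?_⟩
    intro x hx
    rw [SimpleGraph.Walk.support_concat, List.mem_append] at hx
    rcases hx with h | h
    · exact hW x h
    · rw [List.mem_singleton] at h; subst h; exact hwT
  -- the separator derivation lies in the span of Θ
  have hθmem : sepDer K ℓ T C ∈ derModule K ℓ G := sepDer_mem G T C hcl
  rw [← hΘ.2.1] at hθmem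
  obtain ⟨f, -, hf⟩ := Submodule.mem_span_finset.1 hθmem
  -- the substitution into `S[y]`
  set g : Fin ℓ → Polynomial (MvPolynomial (Fin ℓ) K) :=
    fun v => if v ∈ T then Polynomial.C (X v) else Polynomial.X with hgdef
  have hgdeg : ∀ v, (g v).natDegree ≤ 1 := by
    intro v
    by_cases h : v ∈ T <;>
      simp [hgdef, h, Polynomial.natDegree_X_le]
  -- key vanishing for generators
  have key : ∀ η ∈ Θ,
      (aeval g (η (X a)) - aeval g (η (X b)) :
        Polynomial (MvPolynomial (Fin ℓ) K)) = 0 := by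
    intro η hη
    obtain ⟨p, hphom⟩ := hΘ.1 η hη
    have hpd : p ≤ d := hd.2 ⟨η, hη, hphom⟩
    have hηD : η ∈ derModule K ℓ G := by
      rw [← hΘ.2.1]; exact Submodule.subset_span hη
    apply Polynomial.eq_zero_of_natDegree_lt_card_of_eval_eq_zero' _
      (T.image fun t => (X t : MvPolynomial (Fin ℓ) K))
    · intro r hr
      obtain ⟨t, htT, rfl⟩ := Finset.mem_image.1 hr
      -- a walk from a to b avoiding T ∖ {t}
      have hns : ¬ Separates G (T.erase t) a b := hmin _ (Finset.erase_ssubset htT)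
      rw [Separates] at hns
      push_neg at hns
      obtain ⟨W0, hW0⟩ := hns (fun h => hS.1 (Finset.erase_subset _ _ h))
        (fun h => hS.2.1 (Finset.erase_subset _ _ h))
      have hWavoid : ∀ v ∈ W0.support, v ∈ T → v = t := by
        intro v hv hvT
        by_contra hne
        exact hW0 v hv (Finset.mem_erase.2 ⟨hne, hvT⟩)
      obtain ⟨v0, hv0s, hv0T⟩ := hS.2.2 W0
      have ht0 : t ∈ W0.support := hWavoid v0 hv0s hv0T ▸ hv0s
      -- the evaluation of the substitution at `x_t`
      set νt : MvPolynomial (Fin ℓ) K →+* MvPolynomial (Fin ℓ) K :=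
        (Polynomial.evalRingHom (X t)).comp (aeval g).toRingHom with hνt
      have hνtX : ∀ v, νt (X v) = if v ∈ T then X v else X t := by
        intro v
        by_cases h : v ∈ T <;> simp [hνt, hgdef, h]
      have hedge : ∀ (u' w' : Fin ℓ) (Wx : G.Walk u' w'),
          (∀ v ∈ Wx.support, v ∈ T → v = t) →
          νt (η (X u')) = νt (η (X w')) := by
        intro u' w' Wx hWx
        refine walk_transport hηD νt Wx ?_
        intro i hi j hj hadj
        rw [map_sub, hνtX, hνtX]
        by_cases hiT : i ∈ T <;> by_cases hjT : j ∈ T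
        · exact absurd ((hWx i hi hiT).symm ▸ (hWx j hj hjT).symm ▸ hadj) (G.irrefl)
        · have := hWx i hi hiT
          subst this
          simp [hiT, hjT]
        · have := hWx j hj hjT
          subst this
          simp [hiT, hjT]
        · simp [hiT, hjT]
      have e1 : νt (η (X a)) = νt (η (X t)) :=
        hedge a t (W0.takeUntil t ht0) (fun v hv hvT =>
          hWavoid v (W0.support_takeUntil_subset ht0 hv) hvT)
      have ht1 : t ∈ W0.reverse.support := by
        rw [SimpleGraph.Walk.support_reverse]; exact List.mem_reverse.2 ht0
      have e2 : νt (η (X b)) = νt (η (X t)) := by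
        refine hedge b t (W0.reverse.takeUntil t ht1) (fun v hv hvT =>
          hWavoid v ?_ hvT)
        have := W0.reverse.support_takeUntil_subset ht1 hv
        rwa [SimpleGraph.Walk.support_reverse, List.mem_reverse] at this
      have hev : ∀ q : MvPolynomial (Fin ℓ) K,
          Polynomial.eval (X t : MvPolynomial (Fin ℓ) K) (aeval g q) = νt q :=
        fun q => rfl
      rw [Polynomial.eval_sub, hev, hev, e1, e2, sub_self]
    · rw [Finset.card_image_of_injective _ MvPolynomial.X_injective, hTcard]
      have h1 : (aeval g (η (X a)) : Polynomial (MvPolynomial (Fin ℓ) K)).natDegree ≤ p :=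
        (natDegree_aeval_le g hgdeg _).trans (hphom.2 a).totalDegree_le
      have h2 : (aeval g (η (X b)) : Polynomial (MvPolynomial (Fin ℓ) K)).natDegree ≤ p :=
        (natDegree_aeval_le g hgdeg _).trans (hphom.2 b).totalDegree_le
      exact lt_of_le_of_lt ((Polynomial.natDegree_sub_le _ _).trans (max_le h1 h2))
        (lt_of_le_of_lt hpd hlt)
  -- evaluate the generating identity
  have hsum : ∀ x : MvPolynomial (Fin ℓ) K,
      sepDer K ℓ T C x = ∑ η ∈ Θ, f η * η x := by
    intro x
    rw [← hf, der_sum_apply]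
    exact Finset.sum_congr rfl fun η _ => by rw [Derivation.smul_apply, smul_eq_mul]
  have hθa : sepDer K ℓ T C (X a) = ∏ t ∈ T, (X a - X t) := by
    rw [sepDer_apply_X, if_pos haC]
  have hθb : sepDer K ℓ T C (X b) = 0 := by
    rw [sepDer_apply_X, if_neg hbC]
  have hzero : (aeval g (sepDer K ℓ T C (X a)) - aeval g (sepDer K ℓ T C (X b)) :
      Polynomial (MvPolynomial (Fin ℓ) K)) = 0 := by
    rw [hsum (X a), hsum (X b), map_sum, map_sum, ← Finset.sum_sub_distrib]
    refine Finset.sum_eq_zero fun η hη => ?_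
    rw [map_mul, map_mul, ← mul_sub, key η hη, mul_zero]
  rw [hθa, hθb, map_zero, sub_zero, map_prod] at hzero
  have hfact : ∀ t ∈ T, aeval g ((X a - X t : MvPolynomial (Fin ℓ) K))
      = (Polynomial.X - Polynomial.C (X t) : Polynomial (MvPolynomial (Fin ℓ) K)) := by
    intro t ht
    rw [map_sub, aeval_X, aeval_X, hgdef]
    simp [hS.1, ht]
  rw [Finset.prod_congr rfl hfact] at hzero
  have hmon : (∏ t ∈ T, (Polynomial.X - Polynomial.C (X t) :
      Polynomial (MvPolynomial (Fin ℓ) K))).Monic :=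
    Polynomial.monic_prod_of_monic _ _ fun t _ => Polynomial.monic_X_sub_C _
  exact hmon.ne_zero hzero
end
end

section
/- Let G be a connected finite simple graph, let d be the maximal degree in the derivation degree sequence of a minimal generating set of D(A(G)), and let c be the maximal cardinality of a clique in G. Then d ≥ c − 1. -/
open MvPolynomial

set_option maxHeartbeats 1000000
set_option synthInstance.maxHeartbeats 400000

noncomputable section

namespace Stmt16Aux

variable {K : Type*} [Field K] {ℓ : ℕ}

/-- Evaluation of a derivation at `X a`, as an `S`-linear map. -/
def evalXat (K : Type*) [Field K] (ℓ : ℕ) (a : Fin ℓ) :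
    Derivation K (MvPolynomial (Fin ℓ) K) (MvPolynomial (Fin ℓ) K)
      →ₗ[MvPolynomial (Fin ℓ) K] MvPolynomial (Fin ℓ) K where
  toFun θ := θ (X a)
  map_add' _ _ := rfl
  map_smul' _ _ := rfl

@[simp] lemma evalXat_apply (a : Fin ℓ) (θ : Derivation K (MvPolynomial (Fin ℓ) K) (MvPolynomial (Fin ℓ) K)) :
    evalXat K ℓ a θ = θ (X a) := rfl

lemma theta_apply (k : ℕ) (a : Fin ℓ) :
    theta K ℓ k (X a) = X a ^ k := by
  show evalXat K ℓ a (theta K ℓ k) = X a ^ k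
  rw [theta, map_sum]
  rw [Finset.sum_eq_single_of_mem a (Finset.mem_univ a)]
  · rw [evalXat_apply, Derivation.smul_apply, pderiv_X_self, smul_eq_mul, mul_one]
  · intro i _ hi
    rw [evalXat_apply, Derivation.smul_apply, pderiv_X_of_ne (Ne.symm hi), smul_zero]

lemma theta_mem (G : SimpleGraph (Fin ℓ)) (k : ℕ) :
    theta K ℓ k ∈ derModule K ℓ G := by
  intro i j _
  rw [Derivation.map_sub, theta_apply, theta_apply, Ideal.mem_span_singleton]
  exact sub_dvd_pow_sub_pow _ _ k

lemma prime_X_sub_X {a b : Fin ℓ} (hab : a ≠ b) :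
    Prime (X a - X b : MvPolynomial (Fin ℓ) K) := by
  have hXb : Prime (X b : MvPolynomial (Fin ℓ) K) := by
    cases ℓ with
    | zero => exact absurd b.2 (by omega)
    | succ m =>
      let e : MvPolynomial (Fin (m + 1)) K ≃ₐ[K] Polynomial (MvPolynomial (Fin m) K) :=
        (renameEquiv K (Equiv.swap b 0)).trans (finSuccEquiv K m)
      have he : e (X b) = Polynomial.X := by
        simp [e, renameEquiv_apply, rename_X, Equiv.swap_apply_left, finSuccEquiv_X_zero]
      have : Prime (e (X b)) := by rw [he]; exact Polynomial.prime_X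
      exact (MulEquiv.prime_iff e.toMulEquiv).mp this
  let F : MvPolynomial (Fin ℓ) K →ₐ[K] MvPolynomial (Fin ℓ) K :=
    aeval (fun k => if k = b then X a - X b else X k)
  have hFF : F.comp F = AlgHom.id K _ := by
    apply algHom_ext
    intro k
    by_cases hk : k = b
    · subst hk
      simp [F, aeval_X, if_neg hab, sub_sub_cancel]
    · simp [F, aeval_X, hk]
  let T := AlgEquiv.ofAlgHom F F hFF hFF
  have hT : T (X b) = X a - X b := by
    show F (X b) = X a - X b
    simp [F, aeval_X]
  have := (MulEquiv.prime_iff T.toMulEquiv).mpr hXb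
  rwa [show T.toMulEquiv (X b) = T (X b) from rfl, hT] at this

lemma not_dvd_X_sub {a b a' b' : Fin ℓ} (hab : a ≠ b) (h1 : a' ≠ b')
    (h2 : ¬(a' = a ∧ b' = b)) (h3 : ¬(a' = b ∧ b' = a)) :
    ¬ ((X a - X b : MvPolynomial (Fin ℓ) K) ∣ (X a' - X b')) := by
  rintro ⟨u, hu⟩
  let g : MvPolynomial (Fin ℓ) K →ₐ[K] MvPolynomial (Fin ℓ) K :=
    aeval (fun k => if k = b then X a else X k)
  have hg0 : g (X a - X b) = 0 := by
    simp [g, aeval_X, if_neg hab]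
  have hthis := congrArg g hu
  rw [map_mul, hg0, zero_mul, map_sub] at hthis
  simp only [g, aeval_X] at hthis
  have hsub : ∀ u v : Fin ℓ, (X u : MvPolynomial (Fin ℓ) K) - X v = 0 → u = v := by
    intro u v h
    exact X_injective (sub_eq_zero.mp h)
  split_ifs at hthis with hA hB hB
  · exact h1 (hA.trans hB.symm)
  · exact h3 ⟨hA, (hsub _ _ hthis).symm⟩
  · exact h2 ⟨hsub _ _ hthis, hB⟩
  · exact h1 (hsub _ _ hthis)

lemma prod_primes_dvd' {R : Type*} [CommRing R] [IsDomain R] {ι : Type*} [DecidableEq ι]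
    (s : Finset ι) (p : ι → R) (D : R) (hp : ∀ i ∈ s, Prime (p i))
    (hnd : ∀ i ∈ s, ∀ j ∈ s, i ≠ j → ¬ p i ∣ p j)
    (hd : ∀ i ∈ s, p i ∣ D) : (∏ i ∈ s, p i) ∣ D := by
  induction s using Finset.induction_on with
  | empty => simpa using one_dvd D
  | @insert a s ha IH =>
    obtain ⟨m, hm⟩ := IH (fun i hi => hp i (Finset.mem_insert_of_mem hi))
      (fun i hi j hj hij => hnd i (Finset.mem_insert_of_mem hi) j (Finset.mem_insert_of_mem hj) hij)
      (fun i hi => hd i (Finset.mem_insert_of_mem hi))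
    have hpa := hp a (Finset.mem_insert_self a s)
    have hda : p a ∣ (∏ i ∈ s, p i) * m := hm ▸ hd a (Finset.mem_insert_self a s)
    rcases (Prime.dvd_mul hpa).mp hda with h | h
    · obtain ⟨i, hi, hdvd⟩ := hpa.exists_mem_finset_dvd h
      exact absurd hdvd (hnd a (Finset.mem_insert_self a s) i (Finset.mem_insert_of_mem hi)
        (fun h' => ha (h' ▸ hi)))
    · obtain ⟨m', rfl⟩ := h
      refine ⟨m', ?_⟩
      rw [Finset.prod_insert ha, hm]
      ring

lemma hom_eq_zero {D Δ : MvPolynomial (Fin ℓ) K} {e B : ℕ}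
    (hD : D.IsHomogeneous e) (hΔ : Δ.IsHomogeneous B) (hdvd : Δ ∣ D) (hlt : e < B) :
    D = 0 := by
  obtain ⟨q, rfl⟩ := hdvd
  have h1 : homogeneousComponent e (Δ * q) = Δ * q := by
    rw [homogeneousComponent_of_mem ((mem_homogeneousSubmodule _ _).mpr hD), if_pos rfl]
  have h2 : Δ * q = ∑ i ∈ Finset.range (q.totalDegree + 1), Δ * homogeneousComponent i q := by
    rw [← Finset.mul_sum, sum_homogeneousComponent]
  rw [← h1]
  conv_lhs => rw [h2]
  rw [map_sum]
  apply Finset.sum_eq_zero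
  intro i _
  have hmem := (mem_homogeneousSubmodule (B + i) (Δ * homogeneousComponent i q)).mpr
    (hΔ.mul (homogeneousComponent_isHomogeneous i q))
  rw [homogeneousComponent_of_mem hmem, if_neg (show ¬ e = B + i by omega)]

lemma det_updateColumn_finset_sum {n : Type*} [DecidableEq n] [Fintype n]
    {R : Type*} [CommRing R] {ι : Type*} [DecidableEq ι] (s : Finset ι)
    (M : Matrix n n R) (j : n) (u : ι → n → R) :
    (M.updateCol j (fun i => ∑ θ ∈ s, u θ i)).det
      = ∑ θ ∈ s, (M.updateCol j (u θ)).det := by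
  induction s using Finset.induction_on with
  | empty =>
    simp only [Finset.sum_empty]
    exact Matrix.det_eq_zero_of_column_eq_zero j (fun i => by
      rw [Matrix.updateCol_self])
  | @insert a s ha IH =>
    simp only [Finset.sum_insert ha]
    have : (fun i => u a i + ∑ θ ∈ s, u θ i) = (u a) + (fun i => ∑ θ ∈ s, u θ i) := rfl
    rw [this, Matrix.det_updateCol_add, IH]

/-- The key vanishing lemma: the determinant of the Vandermonde matrix with last column
replaced by a tangent vector of low homogeneous degree vanishes. -/
lemma det_update_eq_zero {c : ℕ} (hc : 1 < c) (w : Fin c → Fin ℓ) (hw : Function.Injective w)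
    (v : Fin c → MvPolynomial (Fin ℓ) K) (p : ℕ) (hp : p < c - 1)
    (hv : ∀ i, (v i).IsHomogeneous p)
    (ht : ∀ i j, (X (w i) - X (w j) : MvPolynomial (Fin ℓ) K) ∣ (v i - v j)) :
    ((Matrix.vandermonde fun i => (X (w i) : MvPolynomial (Fin ℓ) K)).updateCol
      ⟨c - 1, by omega⟩ v).det = 0 := by
  set lst : Fin c := ⟨c - 1, by omega⟩ with hlst
  set M := ((Matrix.vandermonde fun i => (X (w i) : MvPolynomial (Fin ℓ) K)).updateCol lst v)
    with hMdef
  have hM : ∀ i j, M i j = if j = lst then v i else X (w i) ^ (j : ℕ) := by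
    intro i j
    rw [hMdef, Matrix.updateCol_apply]
    split_ifs with h
    · rfl
    · rw [Matrix.vandermonde_apply]
  -- homogeneity of the determinant
  set T : ℕ := ∑ j ∈ Finset.univ.erase lst, (j : Fin c).1 with hT
  have hsum : ∑ i : Fin c, (if i = lst then p else (i : ℕ)) = p + T := by
    rw [← Finset.add_sum_erase _ _ (Finset.mem_univ lst), if_pos rfl]
    congr 1
    exact Finset.sum_congr rfl (fun i hi => if_neg (Finset.ne_of_mem_erase hi))
  have hDhom : M.det.IsHomogeneous (p + T) := by
    rw [Matrix.det_apply]
    apply MvPolynomial.IsHomogeneous.sum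
    intro σ _
    have hterm : (∏ i, M (σ i) i).IsHomogeneous (p + T) := by
      rw [← hsum]
      apply MvPolynomial.IsHomogeneous.prod
      intro i _
      rw [hM]
      split_ifs with h
      · exact hv _
      · exact isHomogeneous_X_pow _ _
    rcases Int.units_eq_one_or (Equiv.Perm.sign σ) with h | h <;> rw [h]
    · simpa using hterm
    · have : ((-1 : ℤˣ) • ∏ i, M (σ i) i) = -(∏ i, M (σ i) i) := by
        simp [Units.smul_def]
      rw [this]
      exact hterm.neg
  -- divisibility by the Vandermonde product
  set P : Finset ((_ : Fin c) × Fin c) := Finset.univ.sigma fun i => Finset.Ioi i with hP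
  have hmemP : ∀ x : ((_ : Fin c) × Fin c), x ∈ P ↔ x.1 < x.2 := by
    intro x
    rw [hP, Finset.mem_sigma, Finset.mem_Ioi]
    simp
  have hfac : ∀ x ∈ P, Prime (X (w x.2) - X (w x.1) : MvPolynomial (Fin ℓ) K) := by
    intro x hx
    exact prime_X_sub_X (hw.ne (ne_of_gt ((hmemP x).mp hx)))
  have hdiv : ∀ x ∈ P, (X (w x.2) - X (w x.1) : MvPolynomial (Fin ℓ) K) ∣ M.det := by
    intro x hx
    have hxlt := (hmemP x).mp hx
    have hne : x.1 ≠ x.2 := ne_of_lt hxlt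
    rw [← Ideal.mem_span_singleton, ← Ideal.Quotient.eq_zero_iff_mem]
    set q := Ideal.Quotient.mk (Ideal.span {(X (w x.2) - X (w x.1) : MvPolynomial (Fin ℓ) K)})
      with hq
    rw [show (Ideal.Quotient.mk (Ideal.span {(X (w x.2) - X (w x.1) :
        MvPolynomial (Fin ℓ) K)})) M.det = (q : MvPolynomial (Fin ℓ) K →+* _) M.det from rfl,
      RingHom.map_det]
    apply Matrix.det_zero_of_row_eq hne
    funext j
    simp only [RingHom.mapMatrix_apply, Matrix.map_apply]
    rw [hM, hM]
    have hXq : q (X (w x.1)) = q (X (w x.2)) := by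
      rw [← sub_eq_zero, ← map_sub, Ideal.Quotient.eq_zero_iff_mem]
      exact Ideal.mem_span_singleton.mpr (dvd_sub_comm.mp dvd_rfl)
    split_ifs
    · rw [← sub_eq_zero, ← map_sub, Ideal.Quotient.eq_zero_iff_mem]
      exact Ideal.mem_span_singleton.mpr (dvd_sub_comm.mp (ht x.2 x.1))
    · rw [map_pow, map_pow, hXq]
  have hnd : ∀ x ∈ P, ∀ y ∈ P, x ≠ y →
      ¬ ((X (w x.2) - X (w x.1) : MvPolynomial (Fin ℓ) K) ∣ (X (w y.2) - X (w y.1))) := by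
    intro x hx y hy hxy
    have hxlt := (hmemP x).mp hx
    have hylt := (hmemP y).mp hy
    apply not_dvd_X_sub (hw.ne (ne_of_gt hxlt)) (hw.ne (ne_of_gt hylt))
    · rintro ⟨hA, hB⟩
      exact hxy (by
        have h1 : y.2 = x.2 := hw hA
        have h2 : y.1 = x.1 := hw hB
        cases x; cases y
        simp_all)
    · rintro ⟨hA, hB⟩
      have h1 : y.2 = x.1 := hw hA
      have h2 : y.1 = x.2 := hw hB
      have : x.1 < x.1 := by
        calc x.1 < x.2 := hxlt
        _ = y.1 := h2.symm
        _ < y.2 := hylt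
        _ = x.1 := h1
      exact absurd this (lt_irrefl _)
  have hprod : (∏ x ∈ P, (X (w x.2) - X (w x.1) : MvPolynomial (Fin ℓ) K)) ∣ M.det :=
    prod_primes_dvd' P _ _ hfac hnd hdiv
  have hΔhom : (∏ x ∈ P, (X (w x.2) - X (w x.1) : MvPolynomial (Fin ℓ) K)).IsHomogeneous
      (∑ _x ∈ P, 1) := by
    apply MvPolynomial.IsHomogeneous.prod
    intro x _
    exact (isHomogeneous_X _ _).sub (isHomogeneous_X _ _)
  -- degree counting
  have hB : (∑ _x ∈ P, 1) = (c - 1) + T := by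
    have h1 : (∑ _x ∈ P, 1) = P.card := by rw [Finset.card_eq_sum_ones]
    have h2 : P.card = ∑ i : Fin c, (Finset.Ioi i).card := by
      rw [hP, Finset.card_sigma]
    have h3 : ∑ i : Fin c, (Finset.Ioi i).card = ∑ i : Fin c, (c - 1 - (i : ℕ)) := by
      apply Finset.sum_congr rfl
      intro i _
      rw [Fin.card_Ioi]
    have h4 : ∑ i : Fin c, (c - 1 - (i : ℕ)) = ∑ i ∈ Finset.range c, (c - 1 - i) := by
      rw [Fin.sum_univ_eq_sum_range]
    have h5 : ∑ i ∈ Finset.range c, (c - 1 - i) = ∑ i ∈ Finset.range c, i :=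
      Finset.sum_range_reflect id c
    have h6 : ∑ i ∈ Finset.range c, i = ∑ i : Fin c, (i : ℕ) :=
      (Fin.sum_univ_eq_sum_range (fun i => i) c).symm
    have h7 : ∑ i : Fin c, (i : ℕ) = (c - 1) + T := by
      rw [hT, ← Finset.add_sum_erase _ _ (Finset.mem_univ lst)]
    rw [h1, h2, h3, h4, h5, h6, h7]
  rw [hB] at hΔhom
  exact hom_eq_zero hDhom hΔhom hprod (by omega)

end Stmt16Aux

open Stmt16Aux in
theorem stmt16 (K : Type*) [Field K] (ℓ : ℕ) (G : SimpleGraph (Fin ℓ)) (hG : G.Connected)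
    (Θ : Finset (Derivation K (MvPolynomial (Fin ℓ) K) (MvPolynomial (Fin ℓ) K)))
    (hΘ : IsMinimalGenSet K ℓ G Θ)
    (d : ℕ) (hd : IsGreatest {p : ℕ | ∃ θ ∈ Θ, IsHomogeneousDer θ p} d)
    (c : ℕ) (hc : IsGreatest {m : ℕ | ∃ s : Finset (Fin ℓ), G.IsNClique m s} c) :
    c - 1 ≤ d := by
  classical
  by_contra hlt
  push_neg at hlt
  -- extract a clique of size c
  obtain ⟨s, hs⟩ := hc.1
  have hcard : s.card = c := hs.2
  have hc2 : 1 < c := by omega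
  set w : Fin c → Fin ℓ := fun i => ((s.orderIsoOfFin hcard i : s) : Fin ℓ) with hwdef
  have hw : Function.Injective w := fun i j h => (s.orderIsoOfFin hcard).injective (Subtype.ext h)
  have hwmem : ∀ i, w i ∈ s := fun i => (s.orderIsoOfFin hcard i).2
  have hadj : ∀ i j : Fin c, i ≠ j → G.Adj (w i) (w j) := fun i j hij =>
    hs.1 (hwmem i) (hwmem j) (fun h => hij (hw h))
  -- theta (c-1) lies in the span of Θ
  have hθmem : theta K ℓ (c - 1) ∈
      Submodule.span (MvPolynomial (Fin ℓ) K) (Θ : Set _) := by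
    rw [hΘ.2.1]
    exact theta_mem G (c - 1)
  obtain ⟨f, -, hf⟩ := Submodule.mem_span_finset.mp hθmem
  set lst : Fin c := ⟨c - 1, by omega⟩ with hlstdef
  set V := Matrix.vandermonde fun i : Fin c => (X (w i) : MvPolynomial (Fin ℓ) K) with hVdef
  have hcol : ∀ i : Fin c, V i lst = ∑ θ ∈ Θ, f θ * θ (X (w i)) := by
    intro i
    have h1 := congrArg (evalXat K ℓ (w i)) hf
    rw [map_sum] at h1
    have h2 : ∀ θ ∈ Θ, evalXat K ℓ (w i) (f θ • θ) = f θ * θ (X (w i)) := by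
      intro θ _
      show (f θ • θ) (X (w i)) = f θ * θ (X (w i))
      rw [Derivation.smul_apply, smul_eq_mul]
    rw [Finset.sum_congr rfl h2] at h1
    have h3 : evalXat K ℓ (w i) (theta K ℓ (c - 1)) = X (w i) ^ (c - 1) := theta_apply _ _
    rw [h3] at h1
    rw [hVdef, Matrix.vandermonde_apply]
    exact h1.symm
  -- rewrite the determinant
  have hVupdate : V = V.updateCol lst (fun i => ∑ θ ∈ Θ, f θ * θ (X (w i))) := by
    apply Matrix.ext
    intro i j
    rw [Matrix.updateCol_apply]
    split_ifs with h
    · rw [h, hcol]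
    · rfl
  have hdetV : V.det = ∑ θ ∈ Θ, f θ * (V.updateCol lst (fun i => θ (X (w i)))).det := by
    conv_lhs => rw [hVupdate]
    have hfun : (fun i => ∑ θ ∈ Θ, f θ * θ (X (w i)))
        = fun i => ∑ θ ∈ Θ, (f θ • fun i' => θ (X (w i'))) i := rfl
    rw [hfun, det_updateColumn_finset_sum]
    apply Finset.sum_congr rfl
    intro θ _
    rw [Matrix.det_updateCol_smul]
  -- each summand vanishes
  have hzero : ∀ θ ∈ Θ, (V.updateCol lst (fun i => θ (X (w i)))).det = 0 := by
    intro θ hθ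
    obtain ⟨p, hphom⟩ := hΘ.1 θ hθ
    have hpd : p ≤ d := hd.2 ⟨θ, hθ, hphom⟩
    have hθder : θ ∈ derModule K ℓ G := by
      rw [← hΘ.2.1]
      exact Submodule.subset_span hθ
    apply det_update_eq_zero hc2 w hw _ p (by omega)
    · intro i
      exact hphom.2 (w i)
    · intro i j
      by_cases hij : i = j
      · subst hij
        simp
      · have := hθder (w i) (w j) (hadj i j hij)
        rw [Derivation.map_sub] at this
        exact Ideal.mem_span_singleton.mp this
  have hdet0 : V.det = 0 := by
    rw [hdetV]
    apply Finset.sum_eq_zero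
    intro θ hθ
    rw [hzero θ hθ, mul_zero]
  -- but the Vandermonde determinant is nonzero
  have hdetne : V.det ≠ 0 := by
    rw [hVdef, Matrix.det_vandermonde]
    apply Finset.prod_ne_zero_iff.mpr
    intro i _
    apply Finset.prod_ne_zero_iff.mpr
    intro j hj
    have hij : i ≠ j := ne_of_lt (Finset.mem_Ioi.mp hj)
    exact sub_ne_zero_of_ne (fun h => hij (hw (X_injective h)).symm)
  exact hdetne hdet0
end
end
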